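/- arXiv:2203.16211 — 5 statements merged into one kernel-verified Lean document; each statement's English description precedes it below -/
import Mathlib

section
/- Let G = (N, Σ, P, S) be an LS2NF, let A ∈ N and let w be a sentence. The signature (A, w) is locally ambiguous if and only if the derivation A ⇒ w is ambiguous. -/
/-- A positioned token: a terminal together with a line and column number. -/
structure Token (T : Type) where
  tm : T
  line : ℕ
  col : ℕ

/-- A sentence is a finite sequence of positioned tokens. -/
abbrev Sentence (T : Type) := List (Token T)

/-- The right-hand side (clause) of an LS2NF production rule. -/
inductive Clause (T N : Type) where
  | eps : Clause T N
  | atom : T → Clause T N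
  | unary : N → (Sentence T → Prop) → Clause T N
  | binary : N → N → (Sentence T → Sentence T → Prop) → Clause T N

/-- A layout-sensitive grammar in binary normal form (LS2NF).
Layout constraints hold on empty sentences by convention. -/
structure LS2NF (T N : Type) where
  P : Set (N × Clause T N)
  S : N
  finite : P.Finite
  unary_eps : ∀ A B φ, (A, Clause.unary B φ) ∈ P → φ []
  binary_eps_left : ∀ A B₁ B₂ φ, (A, Clause.binary B₁ B₂ φ) ∈ P → ∀ w, φ [] w
  binary_eps_right : ∀ A B₁ B₂ φ, (A, Clause.binary B₁ B₂ φ) ∈ P → ∀ w, φ w []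

/-- Parse trees. -/
inductive ParseTree (T N : Type) where
  | eps : N → ParseTree T N
  | leaf : N → Token T → ParseTree T N
  | unary : N → ParseTree T N → ParseTree T N
  | binary : N → ParseTree T N → ParseTree T N → ParseTree T N

namespace ParseTree

variable {T N : Type}

/-- Root nonterminal of a parse tree. -/
def root : ParseTree T N → N
  | .eps A => A
  | .leaf A _ => A
  | .unary A _ => A
  | .binary A _ _ => A

/-- The sentence at the token leaves of a parse tree, left to right. -/
def word : ParseTree T N → Sentence T
  | .eps _ => []
  | .leaf _ tok => [tok]
  | .unary _ t => t.word
  | .binary _ t₁ t₂ => t₁.word ++ t₂.word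

/-- Validity of a parse tree w.r.t. a grammar. -/
inductive Valid (G : LS2NF T N) : ParseTree T N → Prop
  | eps {A} : (A, Clause.eps) ∈ G.P → Valid G (.eps A)
  | leaf {A} {tok : Token T} : (A, Clause.atom tok.tm) ∈ G.P → Valid G (.leaf A tok)
  | unary {A t φ} : (A, Clause.unary (root t) φ) ∈ G.P → φ (word t) → Valid G t →
      Valid G (.unary A t)
  | binary {A t₁ t₂ φ} : (A, Clause.binary (root t₁) (root t₂) φ) ∈ G.P →
      φ (word t₁) (word t₂) → Valid G t₁ → Valid G t₂ → Valid G (.binary A t₁ t₂)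

end ParseTree

variable {T N : Type}

/-- `t` witnesses the derivation `A ⇒ w`. -/
def Witness (G : LS2NF T N) (t : ParseTree T N) (A : N) (w : Sentence T) : Prop :=
  t.Valid G ∧ t.root = A ∧ t.word = w

/-- `A ⇒ w`: some parse tree witnesses it. -/
def Derives (G : LS2NF T N) (A : N) (w : Sentence T) : Prop :=
  ∃ t, Witness G t A w

/-- `A` is nullable: `A ⇒ ε`. -/
def Nullable (G : LS2NF T N) (A : N) : Prop := Derives G A []

/-- The derivation `A ⇒ w` is ambiguous: two distinct witnessing parse trees exist. -/
def Ambiguous (G : LS2NF T N) (A : N) (w : Sentence T) : Prop :=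
  ∃ t₁ t₂, t₁ ≠ t₂ ∧ Witness G t₁ A w ∧ Witness G t₂ A w

/-- Subtree relation on parse trees. -/
inductive IsSubtree : ParseTree T N → ParseTree T N → Prop
  | refl (t) : IsSubtree t t
  | unary {s t} (A) : IsSubtree s t → IsSubtree s (.unary A t)
  | left {s t₁} (A) (t₂) : IsSubtree s t₁ → IsSubtree s (.binary A t₁ t₂)
  | right {s t₂} (A) (t₁) : IsSubtree s t₂ → IsSubtree s (.binary A t₁ t₂)

/-- One-step reachability `↪` on signatures. -/
inductive StepReach (G : LS2NF T N) : N × Sentence T → N × Sentence T → Prop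
  | unary {A B φ w} : (A, Clause.unary B φ) ∈ G.P → φ w → StepReach G (A, w) (B, w)
  | left {A B B' φ w₁ w₂} : (A, Clause.binary B B' φ) ∈ G.P → φ w₁ w₂ → Derives G B' w₂ →
      StepReach G (A, w₁ ++ w₂) (B, w₁)
  | right {A B B' φ w₁ w₂} : (A, Clause.binary B' B φ) ∈ G.P → φ w₁ w₂ → Derives G B' w₁ →
      StepReach G (A, w₁ ++ w₂) (B, w₂)

/-- Reachability `⇝`: reflexive transitive closure of `↪`. -/
def Reach (G : LS2NF T N) : N × Sentence T → N × Sentence T → Prop :=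
  Relation.ReflTransGen (StepReach G)

/-- `(B, v)` is a sub-derivation of `(A, w)`. -/
def SubDerivation (G : LS2NF T N) (B : N) (v : Sentence T) (A : N) (w : Sentence T) : Prop :=
  ∀ t, Witness G t B v → ∃ T', Witness G T' A w ∧ IsSubtree t T'

/-- Similarity relation `∼` on parse trees. -/
inductive ParseSimilar : ParseTree T N → ParseTree T N → Prop
  | eps (A : N) : ParseSimilar (.eps A) (.eps A)
  | leaf (A : N) (tok : Token T) : ParseSimilar (.leaf A tok) (.leaf A tok)
  | unary {t₁ t₂ : ParseTree T N} (A : N) : t₁.root = t₂.root → t₁.word = t₂.word →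
      ParseSimilar (.unary A t₁) (.unary A t₂)
  | binary {t₁₁ t₁₂ t₂₁ t₂₂ : ParseTree T N} (A : N) :
      t₁₁.root = t₂₁.root → t₁₁.word = t₂₁.word →
      t₁₂.root = t₂₂.root → t₁₂.word = t₂₂.word →
      ParseSimilar (.binary A t₁₁ t₁₂) (.binary A t₂₁ t₂₂)

/-- A signature `(A, w)` is locally ambiguous. -/
def LocalAmb (G : LS2NF T N) (A : N) (w : Sentence T) : Prop :=
  ∃ H h t₁ t₂, Reach G (A, w) (H, h) ∧ ¬ ParseSimilar t₁ t₂ ∧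
    Witness G t₁ H h ∧ Witness G t₂ H h

/-- Edge of the graph representation of an LS2NF. -/
def Edge (G : LS2NF T N) (A B : N) : Prop :=
  (∃ φ, (A, Clause.unary B φ) ∈ G.P) ∨
  (∃ B' φ, (A, Clause.binary B B' φ) ∈ G.P ∧ Nullable G B') ∨
  (∃ B' φ, (A, Clause.binary B' B φ) ∈ G.P ∧ Nullable G B')

/-- An LS2NF is acyclic if its graph representation has no directed cycle. -/
def Acyclic (G : LS2NF T N) : Prop := ∀ A, ¬ Relation.TransGen (Edge G) A A

/-- A model for the SMT encoding with bound `k`: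
a sentence of length `k` plus Boolean values for the variables `D`, `Rε` and `R`. -/
structure Model (T N : Type) (k : ℕ) where
  word : Sentence T
  len_eq : word.length = k
  D : N → ℕ → ℕ → Bool
  Re : N → Bool
  R : N → ℕ → ℕ → Bool

namespace Model

variable {k : ℕ}

/-- `w^m_{x,δ}`: the length-`δ` contiguous subword of `w^m` starting at index `x`. -/
def sub (m : Model T N k) (x δ : ℕ) : Sentence T := (m.word.drop x).take δ

/-- `tm_x`: the terminal of the `x`-th token of `w^m` (if any). -/
def tmAt (m : Model T N k) (x : ℕ) : Option T := (m.word[x]?).map Token.tm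

end Model

/-- `m ⊨ Φ_D^k`. -/
def SatPhiD (G : LS2NF T N) {k : ℕ} (m : Model T N k) : Prop :=
  ∀ A x δ, 0 < δ → x + δ ≤ k →
    (m.D A x δ = true ↔
      (∃ a, (A, Clause.atom a) ∈ G.P ∧ δ = 1 ∧ m.tmAt x = some a) ∨
      (∃ B φ, (A, Clause.unary B φ) ∈ G.P ∧ m.D B x δ = true ∧ φ (m.sub x δ)) ∨
      (∃ B₁ B₂ φ, (A, Clause.binary B₁ B₂ φ) ∈ G.P ∧
        ((Nullable G B₁ ∧ m.D B₂ x δ = true) ∨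
         (Nullable G B₂ ∧ m.D B₁ x δ = true) ∨
         (∃ δ', 0 < δ' ∧ δ' < δ ∧ m.D B₁ x δ' = true ∧
            m.D B₂ (x + δ') (δ - δ') = true ∧
            φ (m.sub x δ') (m.sub (x + δ') (δ - δ'))))))

/-- `m ⊨ Φ_Rε^k`. -/
def SatPhiRe (G : LS2NF T N) {k : ℕ} (m : Model T N k) : Prop :=
  ∀ B, (m.Re B = true ↔
    (B = G.S ∧ k = 0) ∨
    (∃ A φ, (A, Clause.unary B φ) ∈ G.P ∧ m.Re A = true) ∨
    (∃ A B' φ, ((A, Clause.binary B B' φ) ∈ G.P ∨ (A, Clause.binary B' B φ) ∈ G.P) ∧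
      ((m.Re A = true ∧ Nullable G B') ∨
       (∃ x δ, 0 < δ ∧ x + δ ≤ k ∧ m.R A x δ = true ∧ m.D B' x δ = true))))

/-- `m ⊨ Φ_R^k`. -/
def SatPhiR (G : LS2NF T N) {k : ℕ} (m : Model T N k) : Prop :=
  ∀ B x δ, 0 < δ → x + δ ≤ k →
    (m.R B x δ = true ↔
      (B = G.S ∧ x = 0 ∧ δ = k) ∨
      (∃ A φ, (A, Clause.unary B φ) ∈ G.P ∧ m.R A x δ = true ∧ φ (m.sub x δ)) ∨
      (∃ A B' φ δ', (A, Clause.binary B B' φ) ∈ G.P ∧ x + δ + δ' ≤ k ∧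
        m.R A x (δ + δ') = true ∧
        (if δ' = 0 then Nullable G B' else m.D B' (x + δ) δ' = true) ∧
        φ (m.sub x δ) (m.sub (x + δ) δ')) ∨
      (∃ A B' φ δ', (A, Clause.binary B' B φ) ∈ G.P ∧ δ' ≤ x ∧
        m.R A (x - δ') (δ' + δ) = true ∧
        (if δ' = 0 then Nullable G B' else m.D B' (x - δ') δ' = true) ∧
        φ (m.sub (x - δ') δ') (m.sub x δ)))

/-- Using clauses `γ`. -/
inductive UClause (T N : Type) where
  | eps : UClause T N
  | atom : T → UClause T N
  | unary : N → (Sentence T → Prop) → UClause T N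
  | binary : N → ℕ → (Sentence T → Sentence T → Prop) → N → UClause T N

/-- Membership in the using-clause set `Γ(A, δ)`. -/
def InGamma (G : LS2NF T N) (A : N) (δ : ℕ) : UClause T N → Prop
  | .eps => (A, Clause.eps) ∈ G.P
  | .atom a => (A, Clause.atom a) ∈ G.P
  | .unary B φ => (A, Clause.unary B φ) ∈ G.P
  | .binary B₁ δ' φ B₂ => (A, Clause.binary B₁ B₂ φ) ∈ G.P ∧ δ' ≤ δ

/-- Semantics `⟦γ⟧_{x,δ}` of a using clause under a model. -/
def USem (G : LS2NF T N) {k : ℕ} (m : Model T N k) (x δ : ℕ) : UClause T N → Prop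
  | .eps => δ = 0
  | .atom a => δ = 1 ∧ m.tmAt x = some a
  | .unary B φ => if δ = 0 then Nullable G B else (m.D B x δ = true ∧ φ (m.sub x δ))
  | .binary B₁ δ' φ B₂ =>
      φ (m.sub x δ') (m.sub (x + δ') (δ - δ')) ∧
      (if δ' = 0 then Nullable G B₁ else m.D B₁ x δ' = true) ∧
      (if δ' = δ then Nullable G B₂ else m.D B₂ (x + δ') (δ - δ') = true)

/-- `Φ_multi(A, x, δ)` holds under `m`. -/
def PhiMulti (G : LS2NF T N) {k : ℕ} (m : Model T N k) (A : N) (x δ : ℕ) : Prop :=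
  ∃ γ₁ γ₂ : UClause T N, γ₁ ≠ γ₂ ∧ InGamma G A δ γ₁ ∧ InGamma G A δ γ₂ ∧
    USem G m x δ γ₁ ∧ USem G m x δ γ₂

/-- `m ⊨ Φ_amb^k`. -/
def SatPhiAmb (G : LS2NF T N) {k : ℕ} (m : Model T N k) : Prop :=
  SatPhiD G m ∧ SatPhiRe G m ∧ SatPhiR G m ∧
  ∃ H : N, (m.Re H = true ∧ PhiMulti G m H 0 0) ∨
    (∃ x δ, 0 < δ ∧ x + δ ≤ k ∧ m.R H x δ = true ∧ PhiMulti G m H x δ)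

/-- `G'` is a refinement of `G` (same nonterminals, terminals and start symbol). -/
def Refinement (G G' : LS2NF T N) : Prop :=
  G'.S = G.S ∧
  ∀ r ∈ G'.P, r ∈ G.P ∨
    (∃ A B φ, r = (A, Clause.unary B φ) ∧
      (A, Clause.unary B (fun _ => True)) ∈ G.P) ∨
    (∃ A B C φ, r = (A, Clause.binary B C φ) ∧
      (A, Clause.binary B C (fun _ _ => True)) ∈ G.P)

/-!
Reachability transports ambiguity upwards: a step `(A, w) ↪ (B, v)` wraps every witness of
`B ⇒ v` into a witness of `A ⇒ w` by an injective context, so two distinct trees stay distinct.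
Conversely, two distinct witnesses of `A ⇒ w` are either dissimilar, and `(A, w)` is locally
ambiguous on the spot, or similar, and then they differ in a child whose signature is reached
in one step; descending along that child terminates because trees are finite.
-/

theorem ParseSimilar.refl (t : ParseTree T N) : ParseSimilar t t := by
  cases t <;> constructor <;> rfl

theorem ne_of_not_parseSimilar {t₁ t₂ : ParseTree T N} (h : ¬ ParseSimilar t₁ t₂) : t₁ ≠ t₂ :=
  fun e => h (e ▸ ParseSimilar.refl t₁)

variable {G : LS2NF T N}

theorem StepReach.exists_injective_lift {p q : N × Sentence T} (h : StepReach G p q) :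
    ∃ f : ParseTree T N → ParseTree T N, f.Injective ∧
      ∀ t, Witness G t q.1 q.2 → Witness G (f t) p.1 p.2 := by
  cases h with
  | @unary A B φ w hP hφ =>
    refine ⟨.unary A, fun _ _ e => by injection e, ?_⟩
    rintro t ⟨hv, rfl, rfl⟩
    exact ⟨.unary hP hφ hv, rfl, rfl⟩
  | @left A B B' φ w₁ w₂ hP hφ hd =>
    obtain ⟨t', hv', rfl, rfl⟩ := hd
    refine ⟨(.binary A · t'), fun _ _ e => by injection e, ?_⟩
    rintro t ⟨hv, rfl, rfl⟩
    exact ⟨.binary hP hφ hv hv', rfl, rfl⟩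
  | @right A B B' φ w₁ w₂ hP hφ hd =>
    obtain ⟨t', hv', rfl, rfl⟩ := hd
    refine ⟨.binary A t', fun _ _ e => by injection e, ?_⟩
    rintro t ⟨hv, rfl, rfl⟩
    exact ⟨.binary hP hφ hv' hv, rfl, rfl⟩

theorem StepReach.ambiguous {p q : N × Sentence T} (h : StepReach G p q)
    (ha : Ambiguous G q.1 q.2) : Ambiguous G p.1 p.2 := by
  obtain ⟨f, hf, hlift⟩ := h.exists_injective_lift
  obtain ⟨t₁, t₂, hne, h₁, h₂⟩ := ha
  exact ⟨f t₁, f t₂, hf.ne hne, hlift t₁ h₁, hlift t₂ h₂⟩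

theorem Reach.ambiguous {p q : N × Sentence T} (h : Reach G p q)
    (ha : Ambiguous G q.1 q.2) : Ambiguous G p.1 p.2 := by
  induction h using Relation.ReflTransGen.head_induction_on with
  | refl => exact ha
  | head hstep _ ih => exact hstep.ambiguous ih

theorem LocalAmb.of_stepReach {A B : N} {w v : Sentence T} (h : StepReach G (A, w) (B, v))
    (hl : LocalAmb G B v) : LocalAmb G A w := by
  obtain ⟨H, h', t₁, t₂, hr, hrest⟩ := hl
  exact ⟨H, h', t₁, t₂, .head h hr, hrest⟩

theorem ParseSimilar.exists_stepReach_of_ne {t₁ t₂ : ParseTree T N} {A : N} {w : Sentence T}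
    (hs : ParseSimilar t₁ t₂) (h₁ : Witness G t₁ A w) (h₂ : Witness G t₂ A w) (hne : t₁ ≠ t₂) :
    ∃ B v s₁ s₂, StepReach G (A, w) (B, v) ∧ s₁ ≠ s₂ ∧
      Witness G s₁ B v ∧ Witness G s₂ B v ∧ sizeOf s₁ < sizeOf t₁ := by
  obtain ⟨hv₁, rfl, rfl⟩ := h₁
  obtain ⟨hv₂, -⟩ := h₂
  cases hs with
  | eps | leaf => exact absurd rfl hne
  | @unary s₁ s₂ A hr hw =>
    cases hv₁ with | unary hP hφ hvs₁ =>
    cases hv₂ with | unary _ _ hvs₂ =>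
    refine ⟨_, _, s₁, s₂, .unary hP hφ, fun e => hne (e ▸ rfl), ⟨hvs₁, rfl, rfl⟩,
      ⟨hvs₂, hr.symm, hw.symm⟩, ?_⟩
    simp only [ParseTree.unary.sizeOf_spec]; omega
  | @binary s₁ u₁ s₂ u₂ A hrs hws hru hwu =>
    cases hv₁ with | binary hP hφ hvs₁ hvu₁ =>
    cases hv₂ with | binary _ _ hvs₂ hvu₂ =>
    by_cases hsame : s₁ = s₂
    · subst hsame
      refine ⟨_, _, u₁, u₂, .right hP hφ ⟨s₁, hvs₁, rfl, rfl⟩, fun e => hne (e ▸ rfl),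
        ⟨hvu₁, rfl, rfl⟩, ⟨hvu₂, hru.symm, hwu.symm⟩, ?_⟩
      simp only [ParseTree.binary.sizeOf_spec]; omega
    · refine ⟨_, _, s₁, s₂, .left hP hφ ⟨u₁, hvu₁, rfl, rfl⟩, hsame, ⟨hvs₁, rfl, rfl⟩,
        ⟨hvs₂, hrs.symm, hws.symm⟩, ?_⟩
      simp only [ParseTree.binary.sizeOf_spec]; omega

theorem Witness.localAmb_of_ne {t₁ t₂ : ParseTree T N} {A : N} {w : Sentence T}
    (h₁ : Witness G t₁ A w) (h₂ : Witness G t₂ A w) (hne : t₁ ≠ t₂) : LocalAmb G A w := by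
  by_cases hs : ParseSimilar t₁ t₂
  · obtain ⟨B, v, s₁, s₂, hstep, hne', hs₁, hs₂, _⟩ := hs.exists_stepReach_of_ne h₁ h₂ hne
    exact (hs₁.localAmb_of_ne hs₂ hne').of_stepReach hstep
  · exact ⟨A, w, t₁, t₂, .refl, hs, h₁, h₂⟩
termination_by sizeOf t₁

theorem stmt3_general {T N : Type}
    (G : LS2NF T N) (A : N) (w : Sentence T) :
    LocalAmb G A w ↔ Ambiguous G A w := by
  constructor
  · rintro ⟨H, h, t₁, t₂, hreach, hns, h₁, h₂⟩
    exact hreach.ambiguous ⟨t₁, t₂, ne_of_not_parseSimilar hns, h₁, h₂⟩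
  · rintro ⟨t₁, t₂, hne, h₁, h₂⟩
    exact h₁.localAmb_of_ne h₂ hne

/-- `(A, w)` is locally ambiguous iff the derivation `A ⇒ w` is ambiguous. -/
theorem stmt3 {T N : Type} [Finite T] [Finite N] [Nonempty N]
    (G : LS2NF T N) (A : N) (w : Sentence T) :
    LocalAmb G A w ↔ Ambiguous G A w :=
  stmt3_general G A w
end

section
/- Let G = (N, Σ, P, S) be an LS2NF, let A ∈ N and let w be a sentence. If t1 and t2 are two distinct parse trees that both witness A ⇒ w, then there exist a nonterminal H ∈ N, a sentence h, a subtree t1' of t1 and a subtree t2' of t2 such that t1' and t2' both witness H ⇒ h and t1' ≁ t2'. -/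
variable {T N : Type}

/-! Similar nodes have children with equal roots and words, so two distinct similar trees differ
in a pair of corresponding children that again witness a common derivation. Descending through
such pairs, which is structural recursion on the first tree, ends at a dissimilar pair. -/

theorem IsSubtree.trans {r s t : ParseTree T N} (hrs : IsSubtree r s) (hst : IsSubtree s t) :
    IsSubtree r t := by
  induction hst with
  | refl => exact hrs
  | unary A _ ih => exact .unary A ih
  | left A t₂ _ ih => exact .left A t₂ ih
  | right A t₁ _ ih => exact .right A t₁ ih

namespace ParseTree

variable {G : LS2NF T N}

theorem Valid.of_unary {A : N} {t : ParseTree T N} (h : (ParseTree.unary A t).Valid G) :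
    t.Valid G := by
  cases h
  assumption

theorem Valid.of_binary {A : N} {t₁ t₂ : ParseTree T N}
    (h : (ParseTree.binary A t₁ t₂).Valid G) :
    t₁.Valid G ∧ t₂.Valid G := by
  cases h
  constructor <;> assumption

end ParseTree

def HasDissimilarSubtrees (G : LS2NF T N) (t₁ t₂ : ParseTree T N) : Prop :=
  ∃ (H : N) (h : Sentence T) (t₁' t₂' : ParseTree T N),
    IsSubtree t₁' t₁ ∧ IsSubtree t₂' t₂ ∧
    Witness G t₁' H h ∧ Witness G t₂' H h ∧ ¬ ParseSimilar t₁' t₂'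

namespace HasDissimilarSubtrees

variable {G : LS2NF T N}

theorem of_not_similar {t₁ t₂ : ParseTree T N} (v₁ : t₁.Valid G) (v₂ : t₂.Valid G)
    (hr : t₁.root = t₂.root) (hw : t₁.word = t₂.word) (hsim : ¬ ParseSimilar t₁ t₂) :
    HasDissimilarSubtrees G t₁ t₂ :=
  ⟨t₁.root, t₁.word, t₁, t₂, .refl _, .refl _, ⟨v₁, rfl, rfl⟩, ⟨v₂, hr.symm, hw.symm⟩, hsim⟩

theorem mono {s₁ s₂ t₁ t₂ : ParseTree T N} (h : HasDissimilarSubtrees G s₁ s₂)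
    (h₁ : IsSubtree s₁ t₁) (h₂ : IsSubtree s₂ t₂) : HasDissimilarSubtrees G t₁ t₂ := by
  obtain ⟨H, h, t₁', t₂', sub₁, sub₂, hrest⟩ := h
  exact ⟨H, h, t₁', t₂', sub₁.trans h₁, sub₂.trans h₂, hrest⟩

theorem of_ne {t₁ t₂ : ParseTree T N} (v₁ : t₁.Valid G) (v₂ : t₂.Valid G)
    (hr : t₁.root = t₂.root) (hw : t₁.word = t₂.word) (hne : t₁ ≠ t₂) :
    HasDissimilarSubtrees G t₁ t₂ := by
  induction t₁ generalizing t₂ with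
  | eps A | leaf A tok =>
    refine of_not_similar v₁ v₂ hr hw ?_
    rintro ⟨⟩
    exact hne rfl
  | unary A s ih =>
    by_cases hsim : ParseSimilar (.unary A s) t₂
    · cases hsim with
      | @unary _ s' _ hr' hw' =>
        have hs : s ≠ s' := by rintro rfl; exact hne rfl
        exact (ih v₁.of_unary v₂.of_unary hr' hw' hs).mono
          (.unary A (.refl s)) (.unary A (.refl s'))
    · exact of_not_similar v₁ v₂ hr hw hsim
  | binary A s₁ s₂ ih₁ ih₂ =>
    by_cases hsim : ParseSimilar (.binary A s₁ s₂) t₂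
    · cases hsim with
      | @binary _ _ s₁' s₂' _ hr₁ hw₁ hr₂ hw₂ =>
        obtain ⟨v₁₁, v₁₂⟩ := v₁.of_binary
        obtain ⟨v₂₁, v₂₂⟩ := v₂.of_binary
        by_cases hs₁ : s₁ = s₁'
        · have hs₂ : s₂ ≠ s₂' := by rintro rfl; exact hne (hs₁ ▸ rfl)
          exact (ih₂ v₁₂ v₂₂ hr₂ hw₂ hs₂).mono
            (.right A s₁ (.refl s₂)) (.right A s₁' (.refl s₂'))
        · exact (ih₁ v₁₁ v₂₁ hr₁ hw₁ hs₁).mono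
            (.left A s₂ (.refl s₁)) (.left A s₂' (.refl s₁'))
    · exact of_not_similar v₁ v₂ hr hw hsim

end HasDissimilarSubtrees

theorem stmt4_general {T N : Type}
    (G : LS2NF T N) (A : N) (w : Sentence T) (t₁ t₂ : ParseTree T N)
    (hne : t₁ ≠ t₂) (h₁ : Witness G t₁ A w) (h₂ : Witness G t₂ A w) :
    ∃ (H : N) (h : Sentence T) (t₁' t₂' : ParseTree T N),
      IsSubtree t₁' t₁ ∧ IsSubtree t₂' t₂ ∧
      Witness G t₁' H h ∧ Witness G t₂' H h ∧ ¬ ParseSimilar t₁' t₂' :=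
  HasDissimilarSubtrees.of_ne h₁.1 h₂.1 (h₁.2.1.trans h₂.2.1.symm) (h₁.2.2.trans h₂.2.2.symm)
    hne

/-- If `t₁ ≠ t₂` both witness `A ⇒ w`, then there exist `H`, `h`
and subtrees `t₁'` of `t₁` and `t₂'` of `t₂` both witnessing `H ⇒ h` with `t₁' ≁ t₂'`. -/
theorem stmt4 {T N : Type} [Finite T] [Finite N] [Nonempty N]
    (G : LS2NF T N) (A : N) (w : Sentence T) (t₁ t₂ : ParseTree T N)
    (hne : t₁ ≠ t₂) (h₁ : Witness G t₁ A w) (h₂ : Witness G t₂ A w) :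
    ∃ (H : N) (h : Sentence T) (t₁' t₂' : ParseTree T N),
      IsSubtree t₁' t₁ ∧ IsSubtree t₂' t₂ ∧
      Witness G t₁' H h ∧ Witness G t₂' H h ∧ ¬ ParseSimilar t₁' t₂' :=
  stmt4_general G A w t₁ t₂ hne h₁ h₂
end

section
/- Let G = (N, Σ, P, S) be an acyclic LS2NF and fix k ≥ 0. If a model m satisfies Φ_D^k, Φ_R^k and Φ_Rε^k, then for every B ∈ N: Rε^B is true if and only if (S, w^m) ⇝ (B, ε). -/
variable {T N : Type}

/-! `Φ_D` forces `D^A_{x,δ}` to mean `A ⇒ w_{x,δ}`: by induction on `δ` and then along the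
acyclic graph of the grammar. Soundness then follows by the same double induction: every true
`R` or `Rε` variable is justified by a parent signature that is either longer or an edge above
it. For completeness, every signature reachable from `(S, w^m)` is a subword of `w^m` whose `R`
(or, if it is empty, `Rε`) variable is true; each step `↪` preserves this because `Φ_R` and
`Φ_Rε` contain the corresponding clause. -/

theorem wellFounded_of_forall_not_transGen_self {α : Type*} [Finite α] {r : α → α → Prop}
    (h : ∀ a, ¬ Relation.TransGen r a a) : WellFounded r :=
  have : Std.Irrefl (Relation.TransGen r) := ⟨h⟩
  (Finite.wellFounded_of_trans_of_irrefl _).mono fun _ _ => Relation.TransGen.single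

namespace Acyclic

variable [Finite N] {G : LS2NF T N}

theorem wellFounded_edge (h : Acyclic G) : WellFounded (Edge G) :=
  wellFounded_of_forall_not_transGen_self h

theorem wellFounded_edge_swap (h : Acyclic G) : WellFounded (Function.swap (Edge G)) :=
  wellFounded_of_forall_not_transGen_self fun a hc => h a (Relation.transGen_swap.mp hc)

end Acyclic

namespace Model

variable {k : ℕ} (m : Model T N k)

theorem length_sub {x δ : ℕ} (hk : x + δ ≤ k) : (m.sub x δ).length = δ := by
  simp [Model.sub, m.len_eq]
  omega

theorem sub_zero (x : ℕ) : m.sub x 0 = [] := by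
  simp [Model.sub]

theorem sub_add (x δ₁ δ₂ : ℕ) : m.sub x (δ₁ + δ₂) = m.sub x δ₁ ++ m.sub (x + δ₁) δ₂ := by
  simp [Model.sub, List.take_add, List.drop_drop]

theorem sub_full : m.sub 0 k = m.word := by
  simp [Model.sub, m.len_eq]

theorem sub_one {x : ℕ} (hx : x < k) : ∃ tok, m.sub x 1 = [tok] ∧ m.tmAt x = some tok.tm := by
  have hlt : x < m.word.length := by rw [m.len_eq]; exact hx
  exact ⟨m.word[x], by simp [Model.sub, Model.tmAt, List.take_one, hlt]⟩

theorem eq_sub_of_append_eq_sub {x δ : ℕ} {w₁ w₂ : Sentence T} (hk : x + δ ≤ k)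
    (h : w₁ ++ w₂ = m.sub x δ) :
    ∃ δ₁ δ₂, δ₁ + δ₂ = δ ∧ w₁ = m.sub x δ₁ ∧ w₂ = m.sub (x + δ₁) δ₂ := by
  have hlen : w₁.length + w₂.length = δ := by
    rw [← List.length_append, h, m.length_sub hk]
  rw [← hlen, m.sub_add] at h
  obtain ⟨h₁, h₂⟩ := List.append_inj h (by rw [m.length_sub (by omega)])
  exact ⟨_, _, hlen, h₁, h₂⟩

end Model

namespace Derives

variable {G : LS2NF T N} {A B B₁ B₂ : N}

theorem of_atom {tok : Token T} (hP : (A, Clause.atom tok.tm) ∈ G.P) : Derives G A [tok] :=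
  ⟨.leaf A tok, .leaf hP, rfl, rfl⟩

theorem of_unary {φ : Sentence T → Prop} {w : Sentence T} (hP : (A, Clause.unary B φ) ∈ G.P)
    (hφ : φ w) (h : Derives G B w) : Derives G A w := by
  obtain ⟨t, hv, rfl, rfl⟩ := h
  exact ⟨.unary A t, .unary hP hφ hv, rfl, rfl⟩

theorem of_binary {φ : Sentence T → Sentence T → Prop} {w₁ w₂ : Sentence T}
    (hP : (A, Clause.binary B₁ B₂ φ) ∈ G.P) (hφ : φ w₁ w₂)
    (h₁ : Derives G B₁ w₁) (h₂ : Derives G B₂ w₂) : Derives G A (w₁ ++ w₂) := by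
  obtain ⟨t₁, hv₁, rfl, rfl⟩ := h₁
  obtain ⟨t₂, hv₂, rfl, rfl⟩ := h₂
  exact ⟨.binary A t₁ t₂, .binary hP hφ hv₁ hv₂, rfl, rfl⟩

end Derives

namespace SatPhiD

variable {G : LS2NF T N} {k : ℕ} {m : Model T N k} {A B : N} {x δ : ℕ}

theorem derives_of_D [Finite N] (hD : SatPhiD G m) (hacyc : Acyclic G) (hδ : 0 < δ)
    (hk : x + δ ≤ k) (h : m.D A x δ = true) : Derives G A (m.sub x δ) := by
  induction δ using Nat.strong_induction_on generalizing A x with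
  | _ δ ihδ =>
  induction A using hacyc.wellFounded_edge_swap.induction generalizing x with
  | _ A ihA =>
  rcases (hD A x δ hδ hk).mp h with
    ⟨a, hP, rfl, htm⟩ | ⟨B, φ, hP, hB, hφ⟩ |
    ⟨B₁, B₂, φ, hP, ⟨hnull, hB₂⟩ | ⟨hnull, hB₁⟩ | ⟨δ', hδ', hδ'δ, hB₁, hB₂, hφ⟩⟩
  · obtain ⟨tok, hsub, htok⟩ := m.sub_one (by omega : x < k)
    obtain rfl : tok.tm = a := Option.some.inj (htok.symm.trans htm)
    exact hsub ▸ .of_atom hP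
  · exact .of_unary hP hφ (ihA B (Or.inl ⟨φ, hP⟩) hk hB)
  · simpa using Derives.of_binary hP (G.binary_eps_left _ _ _ _ hP _) hnull
      (ihA B₂ (Or.inr (Or.inr ⟨B₁, φ, hP, hnull⟩)) hk hB₂)
  · simpa using Derives.of_binary hP (G.binary_eps_right _ _ _ _ hP _)
      (ihA B₁ (Or.inr (Or.inl ⟨B₂, φ, hP, hnull⟩)) hk hB₁) hnull
  · obtain ⟨δ₂, rfl⟩ : ∃ δ₂, δ = δ' + δ₂ := ⟨δ - δ', by omega⟩
    rw [Nat.add_sub_cancel_left] at hB₂ hφ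
    rw [m.sub_add]
    exact .of_binary hP hφ (ihδ δ' (by omega) hδ' (by omega) hB₁)
      (ihδ δ₂ (by omega) (by omega) (by omega) hB₂)

theorem D_root_of_valid (hD : SatPhiD G m) {t : ParseTree T N} (ht : t.Valid G) (hδ : 0 < δ)
    (hk : x + δ ≤ k) (hw : t.word = m.sub x δ) : m.D t.root x δ = true := by
  induction ht generalizing x δ with
  | eps =>
    have := m.length_sub hk
    simp [← hw, ParseTree.word] at this
    omega
  | @leaf A tok hP =>
    obtain rfl : δ = 1 := by simpa [ParseTree.word] using (hw ▸ m.length_sub hk).symm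
    obtain ⟨tok', hsub, htok⟩ := m.sub_one (by omega : x < k)
    obtain rfl : tok = tok' := by simpa [ParseTree.word, hsub] using hw
    exact (hD A x 1 hδ hk).mpr (Or.inl ⟨tok.tm, hP, rfl, htok⟩)
  | @unary A t φ hP hφ _ ih =>
    exact (hD A x δ hδ hk).mpr (Or.inr (Or.inl ⟨_, φ, hP, ih hδ hk hw, hw ▸ hφ⟩))
  | @binary A t₁ t₂ φ hP hφ hv₁ hv₂ ih₁ ih₂ =>
    obtain ⟨δ₁, δ₂, rfl, h₁, h₂⟩ := m.eq_sub_of_append_eq_sub hk hw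
    refine (hD A x _ hδ hk).mpr (Or.inr (Or.inr ⟨_, _, φ, hP, ?_⟩))
    rcases Nat.eq_zero_or_pos δ₁ with rfl | hδ₁
    · simp only [Model.sub_zero, Nat.add_zero, Nat.zero_add] at h₁ h₂ ⊢
      exact Or.inl ⟨⟨t₁, hv₁, rfl, h₁⟩, ih₂ (by omega) (by omega) h₂⟩
    rcases Nat.eq_zero_or_pos δ₂ with rfl | hδ₂
    · simp only [Model.sub_zero, Nat.add_zero] at h₁ h₂ ⊢
      exact Or.inr (Or.inl ⟨⟨t₂, hv₂, rfl, h₂⟩, ih₁ hδ hk h₁⟩)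
    refine Or.inr (Or.inr ⟨δ₁, hδ₁, by omega, ih₁ hδ₁ (by omega) h₁, ?_⟩)
    rw [Nat.add_sub_cancel_left, ← h₁, ← h₂]
    exact ⟨ih₂ hδ₂ (by omega) h₂, hφ⟩

theorem D_of_derives (hD : SatPhiD G m) (hδ : 0 < δ) (hk : x + δ ≤ k)
    (h : Derives G A (m.sub x δ)) : m.D A x δ = true := by
  obtain ⟨t, ht, rfl, hw⟩ := h
  exact hD.D_root_of_valid ht hδ hk hw

theorem derives_of_ite [Finite N] (hD : SatPhiD G m) (hacyc : Acyclic G) (hk : x + δ ≤ k)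
    (h : if δ = 0 then Nullable G B else m.D B x δ = true) : Derives G B (m.sub x δ) := by
  split_ifs at h with hδ
  · rwa [hδ, m.sub_zero]
  · exact hD.derives_of_D hacyc (by omega) hk h

theorem ite_of_derives (hD : SatPhiD G m) (hk : x + δ ≤ k) (h : Derives G B (m.sub x δ)) :
    if δ = 0 then Nullable G B else m.D B x δ = true := by
  split_ifs with hδ
  · rwa [hδ, m.sub_zero] at h
  · exact hD.D_of_derives (by omega) hk h

end SatPhiD

section Soundness

variable [Finite N] {G : LS2NF T N} {k : ℕ} {m : Model T N k}

theorem SatPhiR.reach_of_R (hR : SatPhiR G m) (hD : SatPhiD G m) (hacyc : Acyclic G)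
    {B : N} {x δ : ℕ} (hδ : 0 < δ) (hk : x + δ ≤ k) (h : m.R B x δ = true) :
    Reach G (G.S, m.word) (B, m.sub x δ) := by
  obtain ⟨n, hn⟩ : ∃ n, k - δ = n := ⟨_, rfl⟩
  induction n using Nat.strong_induction_on generalizing B x δ with
  | _ n ihn =>
  induction B using hacyc.wellFounded_edge.induction generalizing x δ with
  | _ B ihB =>
  -- a parent signature is either strictly longer, or of the same length and an `Edge` above `B`
  have reach_parent : ∀ A y δ', y + (δ + δ') ≤ k → (δ' = 0 → Edge G A B) →
      m.R A y (δ + δ') = true → Reach G (G.S, m.word) (A, m.sub y (δ + δ')) := by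
    intro A y δ' hk' hedge hA
    rcases Nat.eq_zero_or_pos δ' with rfl | hδ'
    · exact ihB A (hedge rfl) hδ hk' hA hn
    · exact ihn _ (by omega) (by omega) hk' hA rfl
  rcases (hR B x δ hδ hk).mp h with
    ⟨rfl, rfl, rfl⟩ | ⟨A, φ, hP, hA, hφ⟩ |
    ⟨A, B', φ, δ', hP, hk', hA, hB', hφ⟩ | ⟨A, B', φ, δ', hP, hδ'x, hA, hB', hφ⟩
  · rw [m.sub_full]
    exact .refl
  · exact (ihB A (Or.inl ⟨φ, hP⟩) hδ hk hA hn).tail (.unary hP hφ)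
  · have hstep := StepReach.left hP hφ (hD.derives_of_ite hacyc hk' hB')
    rw [← m.sub_add] at hstep
    refine (reach_parent A x δ' (by omega) (fun h0 => ?_) hA).tail hstep
    rw [if_pos h0] at hB'
    exact Or.inr (Or.inl ⟨B', φ, hP, hB'⟩)
  · obtain ⟨y, rfl⟩ : ∃ y, x = y + δ' := ⟨x - δ', by omega⟩
    rw [Nat.add_sub_cancel, Nat.add_comm δ' δ] at hA
    rw [Nat.add_sub_cancel] at hB' hφ
    have hstep := StepReach.right hP hφ (hD.derives_of_ite hacyc (by omega) hB')
    rw [← m.sub_add, Nat.add_comm δ' δ] at hstep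
    refine (reach_parent A y δ' (by omega) (fun h0 => ?_) hA).tail hstep
    rw [if_pos h0] at hB'
    exact Or.inr (Or.inr ⟨B', φ, hP, hB'⟩)

theorem SatPhiRe.reach_of_Re (hRe : SatPhiRe G m) (hR : SatPhiR G m) (hD : SatPhiD G m)
    (hacyc : Acyclic G) {B : N} (h : m.Re B = true) : Reach G (G.S, m.word) (B, []) := by
  induction B using hacyc.wellFounded_edge.induction with
  | _ B ihB =>
  rcases (hRe B).mp h with
    ⟨rfl, rfl⟩ | ⟨A, φ, hP, hA⟩ |
    ⟨A, B', φ, hP | hP, ⟨hA, hnull⟩ | ⟨x, δ, hδ, hk, hA, hB'⟩⟩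
  · rw [List.length_eq_zero_iff.mp m.len_eq]
    exact .refl
  · exact (ihB A (Or.inl ⟨φ, hP⟩) hA).tail (.unary hP (G.unary_eps _ _ _ hP))
  · exact (ihB A (Or.inr (Or.inl ⟨B', φ, hP, hnull⟩)) hA).tail
      (StepReach.left (w₁ := []) (w₂ := []) hP (G.binary_eps_left _ _ _ _ hP _) hnull)
  · exact (hR.reach_of_R hD hacyc hδ hk hA).tail
      (StepReach.left (w₁ := []) hP (G.binary_eps_left _ _ _ _ hP _) (hD.derives_of_D hacyc hδ hk hB'))
  · exact (ihB A (Or.inr (Or.inr ⟨B', φ, hP, hnull⟩)) hA).tail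
      (StepReach.right (w₁ := []) (w₂ := []) hP (G.binary_eps_right _ _ _ _ hP _) hnull)
  · have hstep := StepReach.right (w₂ := []) hP (G.binary_eps_right _ _ _ _ hP _)
      (hD.derives_of_D hacyc hδ hk hB')
    rw [List.append_nil] at hstep
    exact (hR.reach_of_R hD hacyc hδ hk hA).tail hstep

end Soundness

namespace Model

variable {k : ℕ}

def Marks (m : Model T N k) (B : N) (v : Sentence T) : Prop :=
  ∃ x δ, x + δ ≤ k ∧ v = m.sub x δ ∧ if δ = 0 then m.Re B = true else m.R B x δ = true

theorem Re_of_marks_nil {m : Model T N k} {B : N} (h : m.Marks B []) : m.Re B = true := by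
  obtain ⟨x, δ, hk, hv, hB⟩ := h
  have hδ : δ = 0 := by simpa [← hv] using (m.length_sub hk).symm
  rwa [if_pos hδ] at hB

end Model

section Completeness

variable {G : LS2NF T N} {k : ℕ} {m : Model T N k}

theorem SatPhiRe.Re_of_binary (hRe : SatPhiRe G m) {A B B' : N} {φ : Sentence T → Sentence T → Prop}
    {x δ : ℕ} (hP : (A, Clause.binary B B' φ) ∈ G.P ∨ (A, Clause.binary B' B φ) ∈ G.P)
    (hk : x + δ ≤ k) (hA : if δ = 0 then m.Re A = true else m.R A x δ = true)
    (hB' : if δ = 0 then Nullable G B' else m.D B' x δ = true) : m.Re B = true := by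
  refine (hRe B).mpr (Or.inr (Or.inr ⟨A, B', φ, hP, ?_⟩))
  split_ifs at hA hB' with hδ
  · exact Or.inl ⟨hA, hB'⟩
  · exact Or.inr ⟨x, δ, by omega, hk, hA, hB'⟩

theorem marks_start (hR : SatPhiR G m) (hRe : SatPhiRe G m) : m.Marks G.S m.word := by
  refine ⟨0, k, by omega, m.sub_full.symm, ?_⟩
  split_ifs with hk
  · exact (hRe _).mpr (Or.inl ⟨rfl, hk⟩)
  · exact (hR _ 0 k (by omega) (by omega)).mpr (Or.inl ⟨rfl, rfl, rfl⟩)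

theorem marks_of_stepReach (hD : SatPhiD G m) (hR : SatPhiR G m) (hRe : SatPhiRe G m)
    {p q : N × Sentence T} (hp : m.Marks p.1 p.2) (hs : StepReach G p q) : m.Marks q.1 q.2 := by
  obtain ⟨x, δ, hk, hw, hA⟩ := hp
  cases hs with
  | unary hP hφ =>
    refine ⟨x, δ, hk, hw, ?_⟩
    split_ifs at hA ⊢ with hδ
    · exact (hRe _).mpr (Or.inr (Or.inl ⟨_, _, hP, hA⟩))
    · exact (hR _ x δ (by omega) hk).mpr (Or.inr (Or.inl ⟨_, _, hP, hA, hw ▸ hφ⟩))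
  | left hP hφ hder =>
    obtain ⟨δ₁, δ₂, rfl, rfl, rfl⟩ := m.eq_sub_of_append_eq_sub hk hw
    have hB' := hD.ite_of_derives (by omega) hder
    refine ⟨x, δ₁, by omega, rfl, ?_⟩
    rcases Nat.eq_zero_or_pos δ₁ with rfl | hδ₁
    · simp only [Nat.zero_add, Nat.add_zero, if_true] at hA hB' ⊢
      exact hRe.Re_of_binary (Or.inl hP) (by omega) hA hB'
    · rw [if_neg (by omega)] at hA ⊢
      exact (hR _ x δ₁ hδ₁ (by omega)).mpr
        (Or.inr (Or.inr (Or.inl ⟨_, _, _, δ₂, hP, by omega, hA, hB', hφ⟩)))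
  | right hP hφ hder =>
    obtain ⟨δ₁, δ₂, rfl, rfl, rfl⟩ := m.eq_sub_of_append_eq_sub hk hw
    have hB' := hD.ite_of_derives (by omega) hder
    refine ⟨x + δ₁, δ₂, by omega, rfl, ?_⟩
    rcases Nat.eq_zero_or_pos δ₂ with rfl | hδ₂
    · simp only [Nat.add_zero, if_true] at hA ⊢
      exact hRe.Re_of_binary (Or.inr hP) (by omega) hA hB'
    · rw [if_neg (by omega)] at hA ⊢
      refine (hR _ (x + δ₁) δ₂ hδ₂ (by omega)).mpr
        (Or.inr (Or.inr (Or.inr ⟨_, _, _, δ₁, hP, by omega, ?_⟩)))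
      rw [Nat.add_sub_cancel]
      exact ⟨hA, hB', hφ⟩

theorem marks_of_reach (hD : SatPhiD G m) (hR : SatPhiR G m) (hRe : SatPhiRe G m)
    {p : N × Sentence T} (h : Reach G (G.S, m.word) p) : m.Marks p.1 p.2 := by
  induction h with
  | refl => exact marks_start hR hRe
  | tail _ hs ih => exact marks_of_stepReach hD hR hRe ih hs

end Completeness

theorem stmt8_general {T N : Type} [Finite N]
    (G : LS2NF T N) (hacyc : Acyclic G) (k : ℕ) (m : Model T N k)
    (hD : SatPhiD G m) (hR : SatPhiR G m) (hRe : SatPhiRe G m) :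
    ∀ B : N, (m.Re B = true ↔ Reach G (G.S, m.word) (B, [])) := fun _ =>
  ⟨hRe.reach_of_Re hR hD hacyc, fun h => Model.Re_of_marks_nil (marks_of_reach hD hR hRe h)⟩

/-- if `m ⊨ Φ_D^k ∧ Φ_R^k ∧ Φ_Rε^k` then
`Rε^B` is true iff `(S, w^m) ⇝ (B, ε)`. -/
theorem stmt8 {T N : Type} [Finite T] [Finite N] [Nonempty N]
    (G : LS2NF T N) (hacyc : Acyclic G) (k : ℕ) (m : Model T N k)
    (hD : SatPhiD G m) (hR : SatPhiR G m) (hRe : SatPhiRe G m) :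
    ∀ B : N, (m.Re B = true ↔ Reach G (G.S, m.word) (B, [])) :=
  stmt8_general G hacyc k m hD hR hRe
end

section
/- Completeness of the encoding: let G = (N, Σ, P, S) be an acyclic LS2NF and fix k ≥ 0. If there exists a sentence w with |w| = k such that the derivation S ⇒ w is ambiguous, then there exists a model m satisfying Φ_amb^k. -/
variable {T N : Type}

/-!
Take for the model the ambiguous sentence `w` itself, with `D^A_{x,δ}` meaning `A ⇒ w_{x,δ}` and
`R`, `Rε` the least solutions of their equations, i.e. the occurrences reachable from `(S, 0, k)`;
these satisfy `Φ_D`, `Φ_R` and `Φ_Rε` by construction. Given two distinct parse trees of `S ⇒ w`,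
descend through both as long as their top nodes are similar, into a child in which they differ;
that child is again a reachable occurrence. Where the descent stops, the two trees are dissimilar,
so the using clauses applied at their roots differ, and both hold in the model: this is `Φ_multi`.
-/

def subword (w : Sentence T) (x δ : ℕ) : Sentence T := (w.drop x).take δ

@[simp] lemma subword_zero (w : Sentence T) (x : ℕ) : subword w x 0 = [] := rfl

lemma subword_zero_length (w : Sentence T) : subword w 0 w.length = w := by
  simp [subword]

lemma length_subword {w : Sentence T} {x δ : ℕ} (h : x + δ ≤ w.length) :
    (subword w x δ).length = δ := by
  simp [subword]
  omega

lemma subword_add (w : Sentence T) (x δ₁ δ₂ : ℕ) :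
    subword w x (δ₁ + δ₂) = subword w x δ₁ ++ subword w (x + δ₁) δ₂ := by
  simp [subword, List.take_add, List.drop_drop]

lemma eq_subword_of_append_eq {w v₁ v₂ : Sentence T} {x δ : ℕ}
    (h : v₁ ++ v₂ = subword w x δ) :
    v₁ = subword w x v₁.length ∧ v₂ = subword w (x + v₁.length) v₂.length := by
  have hlen := congrArg List.length h
  simp only [subword, List.length_append, List.length_take, List.length_drop] at hlen
  have : v₁ ++ v₂ = subword w x v₁.length ++ subword w (x + v₁.length) v₂.length := by
    rw [← subword_add, h]
    simp only [subword, List.take_eq_take_iff, List.length_drop]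
    omega
  refine List.append_inj this ?_
  simp only [subword, List.length_take, List.length_drop]
  omega

lemma length_add_length_of_append_eq_subword {w v₁ v₂ : Sentence T} {x δ : ℕ}
    (h : x + δ ≤ w.length) (hv : v₁ ++ v₂ = subword w x δ) : v₁.length + v₂.length = δ := by
  simpa [length_subword h] using congrArg List.length hv

lemma subword_eq_singleton_iff {w : Sentence T} {x δ : ℕ} {tok : Token T}
    (h : x + δ ≤ w.length) : subword w x δ = [tok] ↔ δ = 1 ∧ w[x]? = some tok := by
  constructor
  · intro hs
    have hδ : δ = 1 := by simpa [length_subword h] using congrArg List.length hs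
    subst hδ
    simpa [subword, List.take_one] using hs
  · rintro ⟨rfl, hx⟩
    simp [subword, List.take_one, hx]

lemma exists_append_eq_subword_iff {w : Sentence T} {x δ : ℕ} (h : x + δ ≤ w.length)
    {P : Sentence T → Sentence T → Prop} :
    (∃ v₁ v₂, subword w x δ = v₁ ++ v₂ ∧ P v₁ v₂) ↔
      ∃ δ' ≤ δ, P (subword w x δ') (subword w (x + δ') (δ - δ')) := by
  constructor
  · rintro ⟨v₁, v₂, hv, hP⟩
    obtain ⟨hv₁, hv₂⟩ := eq_subword_of_append_eq hv.symm
    have hlen := length_add_length_of_append_eq_subword h hv.symm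
    refine ⟨v₁.length, by omega, ?_⟩
    rwa [← hv₁, show δ - v₁.length = v₂.length by omega, ← hv₂]
  · rintro ⟨δ', hle, hP⟩
    refine ⟨_, _, ?_, hP⟩
    rw [← subword_add, Nat.add_sub_cancel' hle]

lemma derives_iff {G : LS2NF T N} {A : N} {v : Sentence T} :
    Derives G A v ↔
      ((A, Clause.eps) ∈ G.P ∧ v = []) ∨
      (∃ tok : Token T, (A, Clause.atom tok.tm) ∈ G.P ∧ v = [tok]) ∨
      (∃ B φ, (A, Clause.unary B φ) ∈ G.P ∧ Derives G B v ∧ φ v) ∨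
      (∃ B₁ B₂ φ, (A, Clause.binary B₁ B₂ φ) ∈ G.P ∧ ∃ v₁ v₂, v = v₁ ++ v₂ ∧
        Derives G B₁ v₁ ∧ Derives G B₂ v₂ ∧ φ v₁ v₂) := by
  constructor
  · rintro ⟨t, hv, rfl, rfl⟩
    cases hv with
    | eps h => exact .inl ⟨h, rfl⟩
    | leaf h => exact .inr <| .inl ⟨_, h, rfl⟩
    | unary h hφ hv => exact .inr <| .inr <| .inl ⟨_, _, h, ⟨_, hv, rfl, rfl⟩, hφ⟩
    | binary h hφ hv₁ hv₂ =>
      exact .inr <| .inr <| .inr ⟨_, _, _, h, _, _, rfl, ⟨_, hv₁, rfl, rfl⟩, ⟨_, hv₂, rfl, rfl⟩, hφ⟩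
  · rintro (⟨h, rfl⟩ | ⟨tok, h, rfl⟩ | ⟨B, φ, h, ⟨t, hv, rfl, rfl⟩, hφ⟩ |
      ⟨B₁, B₂, φ, h, v₁, v₂, rfl, ⟨t₁, hv₁, rfl, rfl⟩, ⟨t₂, hv₂, rfl, rfl⟩, hφ⟩)
    · exact ⟨.eps A, .eps h, rfl, rfl⟩
    · exact ⟨.leaf A tok, .leaf h, rfl, rfl⟩
    · exact ⟨.unary A t, .unary h hφ hv, rfl, rfl⟩
    · exact ⟨.binary A t₁ t₂, .binary h hφ hv₁ hv₂, rfl, rfl⟩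

/-- The occurrences `w_{x,δ}` of nonterminals reachable from `(S, 0, |w|)`, as described by `Φ_R`;
unlike in `Rε`, empty occurrences keep their position. -/
inductive Reached (G : LS2NF T N) (w : Sentence T) : N → ℕ → ℕ → Prop
  | start : Reached G w G.S 0 w.length
  | unary {A B φ x δ} : (A, Clause.unary B φ) ∈ G.P → Reached G w A x δ →
      φ (subword w x δ) → Reached G w B x δ
  | left {A B B' φ x δ δ'} : (A, Clause.binary B B' φ) ∈ G.P → Reached G w A x (δ + δ') →
      Derives G B' (subword w (x + δ) δ') → φ (subword w x δ) (subword w (x + δ) δ') →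
      Reached G w B x δ
  | right {A B B' φ x δ δ'} : (A, Clause.binary B' B φ) ∈ G.P → Reached G w A x (δ' + δ) →
      Derives G B' (subword w x δ') → φ (subword w x δ') (subword w (x + δ') δ) →
      Reached G w B (x + δ') δ

section CanonicalModel

variable {G : LS2NF T N} {w : Sentence T}

lemma Reached.add_le_length {B : N} {x δ : ℕ} (h : Reached G w B x δ) : x + δ ≤ w.length := by
  induction h <;> omega

lemma Reached.left_of_append {A B₁ B₂ : N} {φ} {x δ : ℕ} {v₁ v₂ : Sentence T}
    (hR : Reached G w A x δ) (hr : (A, Clause.binary B₁ B₂ φ) ∈ G.P)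
    (hv : v₁ ++ v₂ = subword w x δ) (hB₂ : Derives G B₂ v₂) (hφ : φ v₁ v₂) :
    Reached G w B₁ x v₁.length := by
  obtain ⟨hv₁, hv₂⟩ := eq_subword_of_append_eq hv
  obtain rfl := length_add_length_of_append_eq_subword hR.add_le_length hv
  rw [hv₁, hv₂] at hφ
  exact .left hr hR (hv₂ ▸ hB₂) hφ

lemma Reached.right_of_append {A B₁ B₂ : N} {φ} {x δ : ℕ} {v₁ v₂ : Sentence T}
    (hR : Reached G w A x δ) (hr : (A, Clause.binary B₁ B₂ φ) ∈ G.P)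
    (hv : v₁ ++ v₂ = subword w x δ) (hB₁ : Derives G B₁ v₁) (hφ : φ v₁ v₂) :
    Reached G w B₂ (x + v₁.length) v₂.length := by
  obtain ⟨hv₁, hv₂⟩ := eq_subword_of_append_eq hv
  obtain rfl := length_add_length_of_append_eq_subword hR.add_le_length hv
  rw [hv₁, hv₂] at hφ
  exact .right hr hR (hv₁ ▸ hB₁) hφ

variable (G w) in
open Classical in
noncomputable def canonicalModel : Model T N w.length where
  word := w
  len_eq := rfl
  D A x δ := decide (Derives G A (subword w x δ))
  Re B := decide (∃ x, Reached G w B x 0)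
  R B x δ := decide (Reached G w B x δ)

@[simp] lemma canonicalModel_D {A : N} {x δ : ℕ} :
    (canonicalModel G w).D A x δ = true ↔ Derives G A (subword w x δ) := by
  simp [canonicalModel]

@[simp] lemma canonicalModel_Re {B : N} :
    (canonicalModel G w).Re B = true ↔ ∃ x, Reached G w B x 0 := by
  simp [canonicalModel]

@[simp] lemma canonicalModel_R {B : N} {x δ : ℕ} :
    (canonicalModel G w).R B x δ = true ↔ Reached G w B x δ := by
  simp [canonicalModel]

@[simp] lemma canonicalModel_sub : (canonicalModel G w).sub = subword w := rfl

@[simp] lemma canonicalModel_tmAt {x : ℕ} : (canonicalModel G w).tmAt x = (w[x]?).map Token.tm :=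
  rfl

lemma canonicalModel_ite_D_iff {B : N} {x δ : ℕ} :
    (if δ = 0 then Nullable G B else (canonicalModel G w).D B x δ = true) ↔
      Derives G B (subword w x δ) := by
  split_ifs with h
  · subst h; rfl
  · exact canonicalModel_D

variable (G w)

theorem satPhiR_canonicalModel : SatPhiR G (canonicalModel G w) := by
  intro B x δ _ _
  simp only [canonicalModel_R, canonicalModel_ite_D_iff, canonicalModel_sub]
  constructor
  · intro h
    cases h with
    | start => exact .inl ⟨rfl, rfl, rfl⟩
    | unary hr hA hφ => exact .inr <| .inl ⟨_, _, hr, hA, hφ⟩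
    | left hr hA hB' hφ =>
      exact .inr <| .inr <| .inl ⟨_, _, _, _, hr, by have := hA.add_le_length; omega, hA, hB', hφ⟩
    | @right A _ B' φ x δ δ' hr hA hB' hφ =>
      exact .inr <| .inr <| .inr ⟨A, B', φ, δ', hr, by omega, by simpa using hA, by simpa using hB',
        by simpa using hφ⟩
  · rintro (⟨rfl, rfl, rfl⟩ | ⟨A, φ, hr, hA, hφ⟩ | ⟨A, B', φ, δ', hr, -, hA, hB', hφ⟩ |
      ⟨A, B', φ, δ', hr, hle, hA, hB', hφ⟩)
    · exact .start
    · exact .unary hr hA hφ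
    · exact .left hr hA hB' hφ
    · have := Reached.right hr hA hB' (by rwa [Nat.sub_add_cancel hle])
      rwa [Nat.sub_add_cancel hle] at this

theorem satPhiRe_canonicalModel : SatPhiRe G (canonicalModel G w) := by
  intro B
  simp only [canonicalModel_Re, canonicalModel_R, canonicalModel_D]
  have binary_case : ∀ {A B' x δ}, Reached G w A x δ → Derives G B' (subword w x δ) →
      ((∃ x, Reached G w A x 0) ∧ Nullable G B') ∨
        ∃ x δ, 0 < δ ∧ x + δ ≤ w.length ∧ Reached G w A x δ ∧ Derives G B' (subword w x δ) := by
    intro A B' x δ hA hB'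
    rcases Nat.eq_zero_or_pos δ with rfl | hδ
    · exact .inl ⟨⟨x, hA⟩, hB'⟩
    · exact .inr ⟨x, δ, hδ, hA.add_le_length, hA, hB'⟩
  constructor
  · rintro ⟨x, h⟩
    generalize h0 : 0 = δ at h
    cases h with
    | start => exact .inl ⟨rfl, by omega⟩
    | unary hr hA => subst h0; exact .inr <| .inl ⟨_, _, hr, _, hA⟩
    | left hr hA hB' =>
      subst h0
      rw [Nat.zero_add] at hA
      exact .inr <| .inr ⟨_, _, _, .inl hr, binary_case hA hB'⟩
    | right hr hA hB' =>
      subst h0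
      exact .inr <| .inr ⟨_, _, _, .inr hr, binary_case hA hB'⟩
  · rintro (⟨rfl, h0⟩ | ⟨A, φ, hr, x, hA⟩ |
      ⟨A, B', φ, hr | hr, ⟨⟨x, hA⟩, hB'⟩ | ⟨x, δ, -, -, hA, hB'⟩⟩)
    · exact ⟨0, by simpa [h0] using (Reached.start : Reached G w G.S 0 w.length)⟩
    · exact ⟨x, .unary hr hA (G.unary_eps _ _ _ hr)⟩
    · exact ⟨x, .left (δ' := 0) hr hA hB' (G.binary_eps_left _ _ _ _ hr _)⟩
    · exact ⟨x, .left (δ' := δ) hr (by simpa using hA) hB' (G.binary_eps_left _ _ _ _ hr _)⟩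
    · exact ⟨x, .right (δ' := 0) hr hA hB' (G.binary_eps_left _ _ _ _ hr _)⟩
    · exact ⟨x + δ, .right (δ := 0) hr hA hB' (G.binary_eps_right _ _ _ _ hr _)⟩

theorem satPhiD_canonicalModel : SatPhiD G (canonicalModel G w) := by
  intro A x δ hδ hx
  have hne : subword w x δ ≠ [] := by
    rw [← List.length_pos_iff, length_subword hx]
    exact hδ
  rw [canonicalModel_D, derives_iff]
  simp only [canonicalModel_D, canonicalModel_sub, canonicalModel_tmAt, hne, and_false, false_or]
  refine or_congr ?_ (or_congr Iff.rfl (exists₃_congr fun B₁ B₂ φ => and_congr_right fun hr => ?_))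
  · simp only [subword_eq_singleton_iff hx, Option.map_eq_some_iff]
    constructor
    · rintro ⟨tok, h, h1, hx⟩
      exact ⟨_, h, h1, tok, hx, rfl⟩
    · rintro ⟨_, h, h1, tok, hx, rfl⟩
      exact ⟨tok, h, h1, hx⟩
  · rw [exists_append_eq_subword_iff hx]
    constructor
    · rintro ⟨δ', hle, hB₁, hB₂, hφ⟩
      rcases Nat.eq_zero_or_pos δ' with rfl | hpos
      · exact .inl ⟨hB₁, by simpa using hB₂⟩
      rcases hle.eq_or_lt with rfl | hlt
      · exact .inr <| .inl ⟨by simpa [Nullable] using hB₂, hB₁⟩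
      · exact .inr <| .inr ⟨δ', hpos, hlt, hB₁, hB₂, hφ⟩
    · rintro (⟨hB₁, hB₂⟩ | ⟨hB₂, hB₁⟩ | ⟨δ', hpos, hlt, hB₁, hB₂, hφ⟩)
      · exact ⟨0, by omega, hB₁, by simpa using hB₂, G.binary_eps_left _ _ _ _ hr _⟩
      · exact ⟨δ, le_rfl, hB₁, by simpa [Nullable] using hB₂,
          by simpa using G.binary_eps_right _ _ _ _ hr _⟩
      · exact ⟨δ', hlt.le, hB₁, hB₂, hφ⟩

variable {G w}

/-- The using clause applied at the root of a parse tree. The tree does not record the layout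
constraint of that clause, hence a relation rather than a function. -/
inductive TopClause : ParseTree T N → UClause T N → Prop
  | eps (A : N) : TopClause (.eps A) .eps
  | leaf (A : N) (tok : Token T) : TopClause (.leaf A tok) (.atom tok.tm)
  | unary (A : N) (t : ParseTree T N) (φ) : TopClause (.unary A t) (.unary t.root φ)
  | binary (A : N) (t₁ t₂ : ParseTree T N) (φ) :
      TopClause (.binary A t₁ t₂) (.binary t₁.root t₁.word.length φ t₂.root)

lemma TopClause.parseSimilar {s₁ s₂ : ParseTree T N} {γ₁ γ₂ : UClause T N}
    (h₁ : TopClause s₁ γ₁) (h₂ : TopClause s₂ γ₂) (hγ : γ₁ = γ₂)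
    (hroot : s₁.root = s₂.root) (hword : s₁.word = s₂.word) : ParseSimilar s₁ s₂ := by
  cases h₁ <;> cases h₂ <;> simp only [reduceCtorEq, UClause.atom.injEq, UClause.unary.injEq,
    UClause.binary.injEq] at hγ <;> simp only [ParseTree.root, ParseTree.word] at hroot hword
  · subst hroot
    exact .eps _
  · simp only [List.cons.injEq, and_true] at hword
    subst hroot hword
    exact .leaf _ _
  · subst hroot
    exact .unary _ hγ.1 hword
  · subst hroot
    obtain ⟨hw₁, hw₂⟩ := List.append_inj hword hγ.2.1
    exact .binary _ hγ.1 hw₁ hγ.2.2.2 hw₂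

lemma exists_topClause {s : ParseTree T N} {x δ : ℕ} (hv : s.Valid G)
    (hw : s.word = subword w x δ) (hx : x + δ ≤ w.length) :
    ∃ γ, TopClause s γ ∧ InGamma G s.root δ γ ∧ USem G (canonicalModel G w) x δ γ := by
  have hδ : s.word.length = δ := by rw [hw, length_subword hx]
  cases hv with
  | eps h => exact ⟨_, .eps _, h, hδ.symm⟩
  | leaf h =>
    refine ⟨_, .leaf _ _, h, ?_⟩
    obtain ⟨h1, hx'⟩ := (subword_eq_singleton_iff hx).1 hw.symm
    exact ⟨h1, by simp [hx']⟩
  | @unary A t φ h hφ hv =>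
    refine ⟨_, .unary _ _ φ, h, ?_⟩
    have hwt : t.word = subword w x δ := hw
    have ht : Derives G t.root (subword w x δ) := ⟨t, hv, rfl, hwt⟩
    simp only [USem]
    split_ifs with h0
    · subst h0
      exact ht
    · exact ⟨canonicalModel_D.2 ht, by rw [canonicalModel_sub, ← hwt]; exact hφ⟩
  | @binary A t₁ t₂ φ h hφ hv₁ hv₂ =>
    obtain ⟨hw₁, hw₂⟩ := eq_subword_of_append_eq hw
    have hl := length_add_length_of_append_eq_subword hx hw
    refine ⟨_, .binary _ _ _ φ, ⟨h, by omega⟩, ?_, ?_, ?_⟩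
    · rw [canonicalModel_sub, ← hw₁, show δ - t₁.word.length = t₂.word.length by omega, ← hw₂]
      exact hφ
    · rw [canonicalModel_ite_D_iff, ← hw₁]
      exact ⟨t₁, hv₁, rfl, rfl⟩
    · simp only [show t₁.word.length = δ ↔ δ - t₁.word.length = 0 by omega]
      rw [canonicalModel_ite_D_iff, show δ - t₁.word.length = t₂.word.length by omega, ← hw₂]
      exact ⟨t₂, hv₂, rfl, rfl⟩

theorem phiMulti_of_not_parseSimilar {s₁ s₂ : ParseTree T N} {H : N} {x δ : ℕ}
    (hx : x + δ ≤ w.length) (h₁ : Witness G s₁ H (subword w x δ))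
    (h₂ : Witness G s₂ H (subword w x δ)) (hsim : ¬ ParseSimilar s₁ s₂) :
    PhiMulti G (canonicalModel G w) H x δ := by
  obtain ⟨hv₁, rfl, hw₁⟩ := h₁
  obtain ⟨hv₂, hr, hw₂⟩ := h₂
  obtain ⟨γ₁, ht₁, hg₁, hs₁⟩ := exists_topClause hv₁ hw₁ hx
  obtain ⟨γ₂, ht₂, hg₂, hs₂⟩ := exists_topClause hv₂ hw₂ hx
  refine ⟨γ₁, γ₂, ?_, hg₁, hr ▸ hg₂, hs₁, hs₂⟩
  exact fun hγ => hsim (ht₁.parseSimilar ht₂ hγ hr.symm (hw₁.trans hw₂.symm))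

theorem exists_reached_not_parseSimilar {t₁ t₂ : ParseTree T N} {A : N} {x δ : ℕ}
    (hne : t₁ ≠ t₂) (h₁ : Witness G t₁ A (subword w x δ))
    (h₂ : Witness G t₂ A (subword w x δ)) (hR : Reached G w A x δ) :
    ∃ H x' δ' s₁ s₂, Reached G w H x' δ' ∧ ¬ ParseSimilar s₁ s₂ ∧
      Witness G s₁ H (subword w x' δ') ∧ Witness G s₂ H (subword w x' δ') := by
  induction t₁ generalizing t₂ A x δ with
  | eps B => exact ⟨A, x, δ, _, t₂, hR, by rintro ⟨⟩; exact hne rfl, h₁, h₂⟩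
  | leaf B tok => exact ⟨A, x, δ, _, t₂, hR, by rintro ⟨⟩; exact hne rfl, h₁, h₂⟩
  | unary B c ih =>
    by_cases hsim : ParseSimilar (.unary B c) t₂
    swap; · exact ⟨A, x, δ, _, t₂, hR, hsim, h₁, h₂⟩
    obtain ⟨hv₁, rfl, hw₁⟩ := h₁
    obtain ⟨hv₂, -, hw₂⟩ := h₂
    cases hsim with | unary _ hroot hword =>
    cases hv₁ with | unary hr hφ hvc =>
    cases hv₂ with | unary _ _ hvc₂ =>
    refine ih (by rintro rfl; exact hne rfl) ⟨hvc, rfl, hw₁⟩ ⟨hvc₂, hroot.symm, hword ▸ hw₁⟩ ?_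
    exact .unary hr hR (hw₁ ▸ hφ)
  | binary B a₁ a₂ ih₁ ih₂ =>
    by_cases hsim : ParseSimilar (.binary B a₁ a₂) t₂
    swap; · exact ⟨A, x, δ, _, t₂, hR, hsim, h₁, h₂⟩
    obtain ⟨hv₁, rfl, hw₁⟩ := h₁
    obtain ⟨hv₂, -, hw₂⟩ := h₂
    cases hsim with | @binary _ _ b₁ b₂ _ hr₁ hw₁' hr₂ hw₂' =>
    cases hv₁ with | binary hr hφ hva₁ hva₂ =>
    cases hv₂ with | binary _ _ hvb₁ hvb₂ =>
    obtain ⟨hs₁, hs₂⟩ := eq_subword_of_append_eq hw₁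
    by_cases ha : a₁ = b₁
    · subst ha
      refine ih₂ (by rintro rfl; exact hne rfl) ⟨hva₂, rfl, hs₂⟩ ⟨hvb₂, hr₂.symm, hw₂' ▸ hs₂⟩ ?_
      exact hR.right_of_append hr hw₁ ⟨_, hva₁, rfl, rfl⟩ hφ
    · refine ih₁ ha ⟨hva₁, rfl, hs₁⟩ ⟨hvb₁, hr₁.symm, hw₁' ▸ hs₁⟩ ?_
      exact hR.left_of_append hr hw₁ ⟨_, hva₂, rfl, rfl⟩ hφ

end CanonicalModel

theorem stmt12_general {T N : Type}
    (G : LS2NF T N) (k : ℕ)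
    (h : ∃ w : Sentence T, w.length = k ∧ Ambiguous G G.S w) :
    ∃ m : Model T N k, SatPhiAmb G m := by
  obtain ⟨w, rfl, t₁, t₂, hne, h₁, h₂⟩ := h
  rw [← subword_zero_length w] at h₁ h₂
  obtain ⟨H, x, δ, s₁, s₂, hR, hsim, hs₁, hs₂⟩ :=
    exists_reached_not_parseSimilar hne h₁ h₂ .start
  refine ⟨canonicalModel G w, satPhiD_canonicalModel G w, satPhiRe_canonicalModel G w,
    satPhiR_canonicalModel G w, H, ?_⟩
  rcases Nat.eq_zero_or_pos δ with rfl | hδ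
  -- `subword w x 0 = subword w 0 0 = []`, so the position of an empty occurrence is irrelevant
  · exact .inl ⟨canonicalModel_Re.2 ⟨x, hR⟩,
      phiMulti_of_not_parseSimilar (Nat.zero_le _) hs₁ hs₂ hsim⟩
  · exact .inr ⟨x, δ, hδ, hR.add_le_length, canonicalModel_R.2 hR,
      phiMulti_of_not_parseSimilar hR.add_le_length hs₁ hs₂ hsim⟩

/-- Completeness: if some sentence `w` with `|w| = k` makes
`S ⇒ w` ambiguous, then some model satisfies `Φ_amb^k`. -/
theorem stmt12 {T N : Type} [Finite T] [Finite N] [Nonempty N]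
    (G : LS2NF T N) (hacyc : Acyclic G) (k : ℕ)
    (h : ∃ w : Sentence T, w.length = k ∧ Ambiguous G G.S w) :
    ∃ m : Model T N k, SatPhiAmb G m :=
  stmt12_general G k h
end

section
/- Let G = (N, Σ, P, S) and G' = (N, Σ, P', S) be LS2NFs such that G' is a refinement of G, and let w be a sentence. If w is unambiguous under G, then w is unambiguous under G'. -/
variable {T N : Type}

namespace Refinement

variable {G G' : LS2NF T N}

theorem valid {t : ParseTree T N} (href : Refinement G G') (h : t.Valid G') : t.Valid G := by
  induction h with
  | eps hP =>
    rcases href.2 _ hP with h | ⟨_, _, _, ⟨⟩, _⟩ | ⟨_, _, _, _, ⟨⟩, _⟩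
    exact .eps h
  | leaf hP =>
    rcases href.2 _ hP with h | ⟨_, _, _, ⟨⟩, _⟩ | ⟨_, _, _, _, ⟨⟩, _⟩
    exact .leaf h
  | unary hP hφ _ ih =>
    rcases href.2 _ hP with h | ⟨_, _, _, ⟨⟩, hTrue⟩ | ⟨_, _, _, _, ⟨⟩, _⟩
    · exact .unary h hφ ih
    · exact .unary hTrue trivial ih
  | binary hP hφ _ _ ih₁ ih₂ =>
    rcases href.2 _ hP with h | ⟨_, _, _, ⟨⟩, _⟩ | ⟨_, _, _, _, ⟨⟩, hTrue⟩
    · exact .binary h hφ ih₁ ih₂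
    · exact .binary hTrue trivial ih₁ ih₂

theorem witness_start {t : ParseTree T N} {w : Sentence T} (href : Refinement G G')
    (h : Witness G' t G'.S w) : Witness G t G.S w :=
  ⟨href.valid h.1, href.1 ▸ h.2.1, h.2.2⟩

end Refinement

theorem stmt13_general {T N : Type}
    (G G' : LS2NF T N) (href : Refinement G G') (w : Sentence T)
    (hunamb : ∀ t₁ t₂ : ParseTree T N,
      Witness G t₁ G.S w → Witness G t₂ G.S w → t₁ = t₂) :
    ∀ t₁ t₂ : ParseTree T N,
      Witness G' t₁ G'.S w → Witness G' t₂ G'.S w → t₁ = t₂ :=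
  fun t₁ t₂ h₁ h₂ => hunamb t₁ t₂ (href.witness_start h₁) (href.witness_start h₂)

/-- refinement preserves unambiguity of a sentence. -/
theorem stmt13 {T N : Type} [Finite T] [Finite N] [Nonempty N]
    (G G' : LS2NF T N) (href : Refinement G G') (w : Sentence T)
    (hunamb : ∀ t₁ t₂ : ParseTree T N,
      Witness G t₁ G.S w → Witness G t₂ G.S w → t₁ = t₂) :
    ∀ t₁ t₂ : ParseTree T N,
      Witness G' t₁ G'.S w → Witness G' t₂ G'.S w → t₁ = t₂ :=
  stmt13_general G G' href w hunamb
end
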